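/- arXiv:2311.03885 — 7 statements merged into one kernel-verified Lean document; each statement's English description precedes it below -/
import Mathlib

section
/- Let X ⊆ {0,1}^N be a set of binary vectors, each with nonempty support, and let Z ⊆ ℝ^N × ℝ × ℝ be a convex set such that (x, p_max(x), p_min(x)) ∈ Z for every x ∈ X. If there exist distinct x₁, x₂ ∈ X with p_max(x₁) > p_max(x₂) or p_min(x₁) > p_min(x₂), then the set of triples (x, η, γ) ∈ Z for which x has nonnegative entries and nonempty support and which are range-violating with respect to p (i.e., η < p_max(x) or γ > p_min(x)) is infinite. -/
/-- Maximum payoff among columns in the support of `x`. -/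
noncomputable def pmax {N : ℕ} (p x : Fin N → ℝ) : ℝ :=
  sSup {v | ∃ i, 0 < x i ∧ p i = v}

/-- Minimum payoff among columns in the support of `x`. -/
noncomputable def pmin {N : ℕ} (p x : Fin N → ℝ) : ℝ :=
  sInf {v | ∃ i, 0 < x i ∧ p i = v}

lemma supp_set_finite {N : ℕ} (p x : Fin N → ℝ) :
    {v | ∃ i, 0 < x i ∧ p i = v}.Finite := by
  apply Set.Finite.subset (Set.finite_range p)
  rintro v ⟨i, _, rfl⟩
  exact ⟨i, rfl⟩

theorem stmt_3 {N : ℕ} (M : ℝ) (hM : 0 ≤ M) (p : Fin N → ℝ)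
    (hp : ∀ i, 0 ≤ p i ∧ p i ≤ M)
    (X : Set (Fin N → ℝ))
    (hXbin : ∀ x ∈ X, ∀ i, x i = 0 ∨ x i = 1)
    (hXsupp : ∀ x ∈ X, ∃ i, 0 < x i)
    (Z : Set ((Fin N → ℝ) × ℝ × ℝ))
    (hZconv : Convex ℝ Z)
    (hZmem : ∀ x ∈ X, ((x, pmax p x, pmin p x) : (Fin N → ℝ) × ℝ × ℝ) ∈ Z)
    (x₁ x₂ : Fin N → ℝ) (h₁ : x₁ ∈ X) (h₂ : x₂ ∈ X) (hne : x₁ ≠ x₂)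
    (hgt : pmax p x₂ < pmax p x₁ ∨ pmin p x₂ < pmin p x₁) :
    {z : (Fin N → ℝ) × ℝ × ℝ | z ∈ Z ∧ (∀ i, 0 ≤ z.1 i) ∧ (∃ i, 0 < z.1 i) ∧
      (z.2.1 < pmax p z.1 ∨ pmin p z.1 < z.2.2)}.Infinite := by
  set A := {v | ∃ i, 0 < x₁ i ∧ p i = v} with hA
  set B := {v | ∃ i, 0 < x₂ i ∧ p i = v} with hB
  have hAfin : A.Finite := supp_set_finite p x₁
  have hBfin : B.Finite := supp_set_finite p x₂
  obtain ⟨i₁, hi₁⟩ := hXsupp x₁ h₁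
  obtain ⟨i₂, hi₂⟩ := hXsupp x₂ h₂
  have hAne : A.Nonempty := ⟨p i₁, i₁, hi₁, rfl⟩
  have hBne : B.Nonempty := ⟨p i₂, i₂, hi₂, rfl⟩
  -- nonnegativity of binary vectors
  have hnn1 : ∀ i, 0 ≤ x₁ i := fun i => by rcases hXbin x₁ h₁ i with h | h <;> simp [h]
  have hnn2 : ∀ i, 0 ≤ x₂ i := fun i => by rcases hXbin x₂ h₂ i with h | h <;> simp [h]
  set f : ℝ → (Fin N → ℝ) × ℝ × ℝ := fun t =>
    t • ((x₁, pmax p x₁, pmin p x₁) : (Fin N → ℝ) × ℝ × ℝ) +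
    (1 - t) • ((x₂, pmax p x₂, pmin p x₂) : (Fin N → ℝ) × ℝ × ℝ) with hf
  have hf1 : ∀ t i, (f t).1 i = t * x₁ i + (1 - t) * x₂ i := by
    intro t i; simp [hf]
  have hkey : ∀ t ∈ Set.Ioo (0:ℝ) 1, f t ∈
      {z : (Fin N → ℝ) × ℝ × ℝ | z ∈ Z ∧ (∀ i, 0 ≤ z.1 i) ∧ (∃ i, 0 < z.1 i) ∧
        (z.2.1 < pmax p z.1 ∨ pmin p z.1 < z.2.2)} := by
    rintro t ⟨ht0, ht1⟩
    have ht1' : 0 < 1 - t := by linarith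
    have hsupp : ∀ i, 0 < (f t).1 i ↔ (0 < x₁ i ∨ 0 < x₂ i) := by
      intro i
      rw [hf1]
      constructor
      · intro h
        by_contra hc
        push_neg at hc
        have e1 : x₁ i = 0 := le_antisymm hc.1 (hnn1 i)
        have e2 : x₂ i = 0 := le_antisymm hc.2 (hnn2 i)
        rw [e1, e2] at h; simp at h
      · rintro (h | h)
        · have := mul_pos ht0 h
          nlinarith [mul_nonneg (le_of_lt ht1') (hnn2 i)]
        · have := mul_pos ht1' h
          nlinarith [mul_nonneg (le_of_lt ht0) (hnn1 i)]
    have hset : {v | ∃ i, 0 < (f t).1 i ∧ p i = v} = A ∪ B := by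
      ext v
      simp only [Set.mem_setOf_eq, Set.mem_union, hA, hB]
      constructor
      · rintro ⟨i, hi, rfl⟩
        rcases (hsupp i).1 hi with h | h
        · exact Or.inl ⟨i, h, rfl⟩
        · exact Or.inr ⟨i, h, rfl⟩
      · rintro (⟨i, hi, rfl⟩ | ⟨i, hi, rfl⟩) <;>
          exact ⟨i, (hsupp i).2 (by tauto), rfl⟩
    have hpmaxt : pmax p (f t).1 = max (pmax p x₁) (pmax p x₂) := by
      rw [pmax, hset, csSup_union hAfin.bddAbove hAne hBfin.bddAbove hBne]
      rfl
    have hpmint : pmin p (f t).1 = min (pmin p x₁) (pmin p x₂) := by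
      rw [pmin, hset, csInf_union hAfin.bddBelow hAne hBfin.bddBelow hBne]
      rfl
    have hZt : f t ∈ Z :=
      hZconv (hZmem x₁ h₁) (hZmem x₂ h₂) (le_of_lt ht0) (le_of_lt ht1') (by ring)
    refine ⟨hZt, ?_, ?_, ?_⟩
    · intro i
      rw [hf1]
      exact add_nonneg (mul_nonneg (le_of_lt ht0) (hnn1 i))
        (mul_nonneg (le_of_lt ht1') (hnn2 i))
    · exact ⟨i₁, (hsupp i₁).2 (Or.inl hi₁)⟩
    · have heta : (f t).2.1 = t * pmax p x₁ + (1 - t) * pmax p x₂ := by simp [hf]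
      have hgam : (f t).2.2 = t * pmin p x₁ + (1 - t) * pmin p x₂ := by simp [hf]
      rcases hgt with h | h
      · left
        rw [heta, hpmaxt]
        have : t * pmax p x₁ + (1 - t) * pmax p x₂ < pmax p x₁ := by nlinarith
        calc t * pmax p x₁ + (1 - t) * pmax p x₂ < pmax p x₁ := this
          _ ≤ max (pmax p x₁) (pmax p x₂) := le_max_left _ _
      · right
        rw [hgam, hpmint]
        have : pmin p x₂ < t * pmin p x₁ + (1 - t) * pmin p x₂ := by nlinarith
        calc min (pmin p x₁) (pmin p x₂) ≤ pmin p x₂ := min_le_right _ _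
          _ < _ := this
  have hinj : Set.InjOn f (Set.Ioo (0:ℝ) 1) := by
    intro s hs t ht hst
    obtain ⟨i, hi⟩ : ∃ i, x₁ i ≠ x₂ i := by
      by_contra hc; push_neg at hc; exact hne (funext hc)
    have := congrArg (fun z => z.1 i) hst
    rw [hf1, hf1] at this
    by_contra hne'
    apply hi
    have : (s - t) * (x₁ i - x₂ i) = 0 := by ring_nf; linarith [this]
    rcases mul_eq_zero.1 this with h | h
    · exact absurd (by linarith : s = t) hne'
    · linarith
  exact ((Set.Ioo_infinite (by norm_num : (0:ℝ) < 1)).image hinj).mono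
    (Set.image_subset_iff.2 hkey)
end

section
/- Let x̄ ∈ [0,1]^N have nonnegative entries and nonempty support, let γ̄ ∈ ℝ satisfy γ̄ > p_min(x̄), and let L ∈ ℝ satisfy p_min(x̄) < L < γ̄. Then (i) there exists an index i with x̄_i > 0 and p_i < L, so x̄ violates the left-branch constraint Σ_{i : p_i < L} x_i = 0, and (ii) γ̄ > L, so γ̄ violates the right-branch constraint γ ≤ L; hence the incumbent solution is infeasible in both child nodes created by range branching on γ. -/
theorem stmt_10 {N : ℕ} (M : ℝ) (hM : 0 ≤ M) (p : Fin N → ℝ)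
    (hp : ∀ i, 0 ≤ p i ∧ p i ≤ M)
    (xbar : Fin N → ℝ) (hxdom : ∀ i, 0 ≤ xbar i ∧ xbar i ≤ 1)
    (hsupp : ∃ i, 0 < xbar i)
    (γbar L : ℝ) (hγ : pmin p xbar < γbar)
    (hL1 : pmin p xbar < L) (hL2 : L < γbar) :
    (∃ i, 0 < xbar i ∧ p i < L) ∧ L < γbar := by
  refine ⟨?_, hL2⟩
  obtain ⟨i0, hi0⟩ := hsupp
  have hne : {v | ∃ i, 0 < xbar i ∧ p i = v}.Nonempty := ⟨p i0, i0, hi0, rfl⟩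
  obtain ⟨v, ⟨i, hxi, rfl⟩, hvL⟩ := exists_lt_of_csInf_lt hne hL1
  exact ⟨i, hxi, hvL⟩
end

section
/- Suppose x ∈ {0,1}^N and y ∈ {0,1}^{N×K} satisfy the order constraints with z ∈ ℝ^K defined by z_k = Σ_{i=1}^N p_i y_{ik} and z₁ ≥ z₂ ≥ … ≥ z_K. Then Σ_{i=1}^N x_i = K and the multiset {z₁, …, z_K} equals the multiset {p_i : x_i = 1}; that is, z is the non-increasingly sorted vector of payoffs of the selected columns. -/
theorem stmt_14 {N K : ℕ} (hK : 1 ≤ K) (p : Fin N → ℝ)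
    (x : Fin N → ℝ) (y : Fin N → Fin K → ℝ)
    (hxbin : ∀ i, x i = 0 ∨ x i = 1)
    (hybin : ∀ i k, y i k = 0 ∨ y i k = 1)
    (hcoup : ∀ i, ∑ k, y i k = x i)
    (hassign : ∀ k, ∑ i, y i k = 1)
    (z : Fin K → ℝ) (hz : ∀ k, z k = ∑ i, p i * y i k)
    (hsort : ∀ k₁ k₂ : Fin K, k₁ ≤ k₂ → z k₂ ≤ z k₁) :
    (∑ i, x i) = (K : ℝ) ∧
      Multiset.map z Finset.univ.val =
        Multiset.map p (Finset.univ.filter fun i => x i = 1).val := by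
  classical
  have hynn : ∀ i k, 0 ≤ y i k := by
    intro i k; rcases hybin i k with h | h <;> rw [h] <;> norm_num
  -- first part
  have hsum : (∑ i, x i) = (K : ℝ) := by
    calc ∑ i, x i = ∑ i, ∑ k, y i k := by simp [hcoup]
    _ = ∑ k : Fin K, ∑ i, y i k := Finset.sum_comm
    _ = ∑ k : Fin K, (1 : ℝ) := by simp [hassign]
    _ = (K : ℝ) := by simp
  refine ⟨hsum, ?_⟩
  -- pair bound
  have hpair : ∀ (a b : Fin N) (k : Fin K), a ≠ b →
      y a k + y b k ≤ ∑ i, y i k := by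
    intro a b k hab
    have h := Finset.sum_le_sum_of_subset_of_nonneg
      (Finset.subset_univ ({a, b} : Finset (Fin N)))
      (fun i _ _ => hynn i k)
    rwa [Finset.sum_pair hab] at h
  -- existence of the selected row in each column
  have hex : ∀ k, ∃ i, y i k = 1 := by
    intro k
    by_contra h
    push_neg at h
    have : ∀ i, y i k = 0 := fun i => (hybin i k).resolve_right (h i)
    have hc := hassign k
    rw [Finset.sum_eq_zero (fun i _ => this i)] at hc
    norm_num at hc
  choose f hf using hex
  -- uniqueness
  have huniq : ∀ k i, y i k = 1 → i = f k := by
    intro k i hi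
    by_contra hne
    have h := hpair i (f k) k hne
    rw [hi, hf k, hassign k] at h
    linarith
  -- injectivity of f
  have hxle : ∀ i, x i ≤ 1 := by
    intro i; rcases hxbin i with h | h <;> rw [h] <;> norm_num
  have hfinj : Function.Injective f := by
    intro k₁ k₂ hk
    by_contra hne
    have h := Finset.sum_le_sum_of_subset_of_nonneg
      (Finset.subset_univ ({k₁, k₂} : Finset (Fin K)))
      (fun k _ _ => hynn (f k₁) k)
    rw [Finset.sum_pair hne, hcoup] at h
    have h1 := hf k₁
    have h2 := hf k₂
    rw [hk] at h h1
    rw [h1, h2] at h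
    have := hxle (f k₂)
    linarith
  -- characterization of selected columns
  have hsel : ∀ i, x i = 1 ↔ ∃ k, f k = i := by
    intro i
    constructor
    · intro hxi
      by_contra h
      push_neg at h
      have : ∀ k, y i k = 0 := by
        intro k
        rcases hybin i k with h0 | h1
        · exact h0
        · exact absurd (huniq k i h1).symm (h k)
      have hc := hcoup i
      rw [Finset.sum_eq_zero (fun k _ => this k), hxi] at hc
      norm_num at hc
    · rintro ⟨k, rfl⟩
      have h := Finset.single_le_sum (fun k' (_ : k' ∈ Finset.univ) => hynn (f k) k')
        (Finset.mem_univ k)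
      rw [hcoup, hf k] at h
      rcases hxbin (f k) with h0 | h1
      · rw [h0] at h; linarith
      · exact h1
  -- z k = p (f k)
  have hzf : ∀ k, z k = p (f k) := by
    intro k
    rw [hz k]
    rw [Finset.sum_eq_single (f k)]
    · rw [hf k, mul_one]
    · intro i _ hne
      rcases hybin i k with h0 | h1
      · rw [h0, mul_zero]
      · exact absurd (huniq k i h1) hne
    · intro h; exact absurd (Finset.mem_univ _) h
  -- finset equality
  have hfil : (Finset.univ.filter fun i => x i = 1) = Finset.univ.image f := by
    ext i
    simp [hsel i, eq_comm]
  rw [hfil, Finset.image_val_of_injOn (hfinj.injOn)]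
  rw [Multiset.map_map]
  exact Multiset.map_congr rfl (fun k _ => hzf k)
end

section
/- Suppose x ∈ {0,1}^N and y ∈ {0,1}^{N×K} satisfy the order constraints with z ∈ ℝ^K defined by z_k = Σ_{i=1}^N p_i y_{ik} and z₁ ≥ z₂ ≥ … ≥ z_K. For each k ∈ {1,…,K} define p^k_−(y) = min{p_i : y_{ij} > 0 for some j ≤ k} and p^k_+(y) = max{p_i : y_{ij} > 0 for some j ≥ k}. Then z_k = p^k_−(y) = p^k_+(y) for every k ∈ {1,…,K}. -/
theorem stmt_15 {N K : ℕ} (hK : 1 ≤ K) (p : Fin N → ℝ)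
    (x : Fin N → ℝ) (y : Fin N → Fin K → ℝ)
    (hxbin : ∀ i, x i = 0 ∨ x i = 1)
    (hybin : ∀ i k, y i k = 0 ∨ y i k = 1)
    (hcoup : ∀ i, ∑ k, y i k = x i)
    (hassign : ∀ k, ∑ i, y i k = 1)
    (z : Fin K → ℝ) (hz : ∀ k, z k = ∑ i, p i * y i k)
    (hsort : ∀ k₁ k₂ : Fin K, k₁ ≤ k₂ → z k₂ ≤ z k₁) :
    ∀ k : Fin K,
      z k = sInf {v | ∃ i, ∃ j : Fin K, j ≤ k ∧ 0 < y i j ∧ p i = v} ∧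
      z k = sSup {v | ∃ i, ∃ j : Fin K, k ≤ j ∧ 0 < y i j ∧ p i = v} := by
  -- key: if y i k > 0 then p i = z k
  have key : ∀ (k : Fin K) (i : Fin N), 0 < y i k → p i = z k := by
    intro k i hi
    have hik : y i k = 1 := (hybin i k).resolve_left (by linarith)
    have hrest : ∀ j ∈ Finset.univ, j ≠ i → p j * y j k = 0 := by
      intro j _ hji
      have hsum := hassign k
      rcases hybin j k with h0 | h1
      · rw [h0]; ring
      · exfalso
        have hpair : ∑ i' ∈ ({i, j} : Finset (Fin N)), y i' k = 2 := by
          rw [Finset.sum_pair (Ne.symm hji), hik, h1]; norm_num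
        have hle : ∑ i' ∈ ({i, j} : Finset (Fin N)), y i' k ≤ ∑ i', y i' k := by
          apply Finset.sum_le_sum_of_subset_of_nonneg (Finset.subset_univ _)
          intro i' _ _
          rcases hybin i' k with h | h <;> simp [h]
        linarith [hsum]
    have := hz k
    rw [Finset.sum_eq_single_of_mem i (Finset.mem_univ i) hrest] at this
    rw [this, hik, mul_one]
  -- existence of an i with y i k > 0
  have exi : ∀ k : Fin K, ∃ i, 0 < y i k := by
    intro k
    by_contra h
    push_neg at h
    have : ∀ i, y i k = 0 := by
      intro i
      rcases hybin i k with h0 | h1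
      · exact h0
      · exact absurd (h1 ▸ one_pos) (not_lt.mpr (h i))
    have h1 := hassign k
    rw [Finset.sum_congr rfl (fun i _ => this i)] at h1
    simp at h1
  intro k
  obtain ⟨i₀, hi₀⟩ := exi k
  constructor
  · -- sInf
    set S := {v | ∃ i, ∃ j : Fin K, j ≤ k ∧ 0 < y i j ∧ p i = v} with hS
    have hmem : z k ∈ S := ⟨i₀, k, le_refl k, hi₀, key k i₀ hi₀⟩
    have hlb : ∀ v ∈ S, z k ≤ v := by
      rintro v ⟨i, j, hjk, hy, rfl⟩
      rw [key j i hy]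
      exact hsort j k hjk
    exact le_antisymm (le_csInf ⟨_, hmem⟩ hlb) (csInf_le ⟨z k, hlb⟩ hmem)
  · set S := {v | ∃ i, ∃ j : Fin K, k ≤ j ∧ 0 < y i j ∧ p i = v} with hS
    have hmem : z k ∈ S := ⟨i₀, k, le_refl k, hi₀, key k i₀ hi₀⟩
    have hub : ∀ v ∈ S, v ≤ z k := by
      rintro v ⟨i, j, hjk, hy, rfl⟩
      rw [key j i hy]
      exact hsort k j hjk
    exact le_antisymm (le_csSup ⟨z k, hub⟩ hmem) (csSup_le ⟨_, hmem⟩ hub)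
end

section
/- Suppose the payoffs are ordered non-increasingly, p₁ ≥ p₂ ≥ … ≥ p_N, and suppose x ∈ {0,1}^N and y ∈ {0,1}^{N×K} satisfy the order constraints with z ∈ ℝ^K defined by z_k = Σ_{i=1}^N p_i y_{ik} and z₁ ≥ z₂ ≥ … ≥ z_K. Then there exists y' ∈ {0,1}^{N×K} satisfying the order constraints with the same x, with Σ_{i=1}^N p_i y'_{ik} = z_k for all k, and such that Σ_{i=1}^{l} y'_{ik} ≥ Σ_{i=1}^{l} y'_{i,k+1} for every k ∈ {1,…,K−1} and every l ∈ {1,…,N}. -/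
theorem stmt_16 {N K : ℕ} (hK : 1 ≤ K) (p : Fin N → ℝ)
    (hpsort : ∀ i j : Fin N, i ≤ j → p j ≤ p i)
    (x : Fin N → ℝ) (y : Fin N → Fin K → ℝ)
    (hxbin : ∀ i, x i = 0 ∨ x i = 1)
    (hybin : ∀ i k, y i k = 0 ∨ y i k = 1)
    (hcoup : ∀ i, ∑ k, y i k = x i)
    (hassign : ∀ k, ∑ i, y i k = 1)
    (z : Fin K → ℝ) (hz : ∀ k, z k = ∑ i, p i * y i k)
    (hsort : ∀ k₁ k₂ : Fin K, k₁ ≤ k₂ → z k₂ ≤ z k₁) :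
    ∃ y' : Fin N → Fin K → ℝ,
      (∀ i k, y' i k = 0 ∨ y' i k = 1) ∧
      (∀ i, ∑ k, y' i k = x i) ∧
      (∀ k, ∑ i, y' i k = 1) ∧
      (∀ k, ∑ i, p i * y' i k = z k) ∧
      (∀ (k : ℕ) (hk : k + 1 < K) (l : Fin N),
        ∑ i ∈ Finset.univ.filter (fun i => i ≤ l), y' i ⟨k + 1, hk⟩ ≤
          ∑ i ∈ Finset.univ.filter (fun i => i ≤ l), y' i ⟨k, Nat.lt_of_succ_lt hk⟩) := by
  -- Each column k has a unique row with a 1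
  have hexists : ∀ k, ∃ i, y i k = 1 ∧ ∀ j, j ≠ i → y j k = 0 := by
    intro k
    by_cases h : ∃ i, y i k = 1
    · obtain ⟨i, hi⟩ := h
      refine ⟨i, hi, ?_⟩
      intro j hj
      by_contra hj0
      have hj1 : y j k = 1 := (hybin j k).resolve_left hj0
      have hsub : ({i, j} : Finset (Fin N)) ⊆ Finset.univ := Finset.subset_univ _
      have h2 : ∑ m ∈ ({i, j} : Finset (Fin N)), y m k ≤ ∑ m, y m k := by
        apply Finset.sum_le_sum_of_subset_of_nonneg hsub
        intro m _ _
        rcases hybin m k with h' | h' <;> simp [h']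
      rw [Finset.sum_pair (fun hij => hj (hij.symm)), hi, hj1, hassign k] at h2
      norm_num at h2
    · push_neg at h
      exfalso
      have h0 : ∑ i, y i k = 0 :=
        Finset.sum_eq_zero (fun i _ => (hybin i k).resolve_right (h i))
      rw [hassign k] at h0
      norm_num at h0
  classical
  set φ : Fin K → Fin N := fun k => (hexists k).choose with hφ
  have hφ1 : ∀ k, y (φ k) k = 1 := fun k => (hexists k).choose_spec.1
  have hφ0 : ∀ k j, j ≠ φ k → y j k = 0 := fun k j hj => (hexists k).choose_spec.2 j hj
  have hy : ∀ i k, y i k = if φ k = i then 1 else 0 := by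
    intro i k
    by_cases hik : φ k = i
    · subst hik; simp [hφ1 k]
    · simp [hik, hφ0 k i (fun h => hik h.symm)]
  set σ : Equiv.Perm (Fin K) := Tuple.sort φ with hσ
  have hmono : Monotone (φ ∘ σ) := Tuple.monotone_sort φ
  have hzφ : ∀ k, z k = p (φ k) := by
    intro k
    rw [hz k]
    simp only [hy]
    rw [Finset.sum_congr rfl (fun i _ => by rw [mul_ite, mul_one, mul_zero]),
      Finset.sum_ite_eq Finset.univ (φ k) p]
    simp
  -- z ∘ σ = z
  have hzσ : ∀ k, z (σ k) = z k := by
    have hzanti : Monotone (fun k => -(z k)) := by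
      intro a b hab
      simp only [neg_le_neg_iff]
      exact hsort a b hab
    have hzσanti : Monotone ((fun k => -(z k)) ∘ σ) := by
      intro a b hab
      simp only [Function.comp_apply, neg_le_neg_iff, hzφ]
      exact hpsort _ _ (hmono hab)
    have h1 : (fun k => -(z k)) ∘ σ = (fun k => -(z k)) ∘ Tuple.sort (fun k => -(z k)) :=
      Tuple.comp_sort_eq_comp_iff_monotone.mpr hzσanti
    have h2 : (fun k => -(z k)) ∘ (1 : Equiv.Perm (Fin K)) =
        (fun k => -(z k)) ∘ Tuple.sort (fun k => -(z k)) :=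
      Tuple.comp_sort_eq_comp_iff_monotone.mpr (by simpa using hzanti)
    have h3 : (fun k => -(z k)) ∘ σ = (fun k => -(z k)) := by
      rw [h1, ← h2]; rfl
    intro k
    have := congrFun h3 k
    simp only [Function.comp_apply] at this
    linarith
  refine ⟨fun i k => if φ (σ k) = i then 1 else 0, ?_, ?_, ?_, ?_, ?_⟩
  · intro i k
    by_cases h : φ (σ k) = i <;> simp [h]
  · intro i
    have := Equiv.sum_comp σ (fun k => if φ k = i then (1:ℝ) else 0)
    rw [this, ← hcoup i]
    exact Finset.sum_congr rfl (fun k _ => (hy i k).symm)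
  · intro k
    rw [Finset.sum_ite_eq Finset.univ (φ (σ k)) (fun _ => (1:ℝ))]
    simp
  · intro k
    rw [Finset.sum_congr rfl (fun i _ => by rw [mul_ite, mul_one, mul_zero]),
      Finset.sum_ite_eq Finset.univ (φ (σ k)) p]
    simp [← hzφ, hzσ]
  · intro k hk l
    have hle : φ (σ ⟨k, Nat.lt_of_succ_lt hk⟩) ≤ φ (σ ⟨k + 1, hk⟩) :=
      hmono (by simp [Fin.le_def])
    rw [Finset.sum_ite_eq (Finset.univ.filter (fun i => i ≤ l)) (φ (σ ⟨k + 1, hk⟩))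
        (fun _ => (1:ℝ)),
      Finset.sum_ite_eq (Finset.univ.filter (fun i => i ≤ l)) (φ (σ ⟨k, Nat.lt_of_succ_lt hk⟩))
        (fun _ => (1:ℝ))]
    simp only [Finset.mem_filter, Finset.mem_univ, true_and]
    by_cases h1 : φ (σ ⟨k + 1, hk⟩) ≤ l
    · rw [if_pos h1, if_pos (le_trans hle h1)]
    · rw [if_neg h1]
      split <;> norm_num
end

section
/- Suppose x ∈ {0,1}^N and y ∈ {0,1}^{N×K} satisfy the order constraints with z ∈ ℝ^K defined by z_k = Σ_{i=1}^N p_i y_{ik} and z₁ ≥ z₂ ≥ … ≥ z_K. Then for any k ∈ {1,…,K} and any Z_k ∈ ℝ, either (z_k ≤ Z_k and y_{ij} = 0 for all j ≥ k and all i with p_i > Z_k) or (z_k ≥ Z_k and y_{ij} = 0 for all j ≤ k and all i with p_i < Z_k); that is, every order-respecting solution satisfies the constraints of at least one of the two child nodes created by order branching at rank k with cutoff Z_k. -/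
theorem stmt_18 {N K : ℕ} (hK : 1 ≤ K) (p : Fin N → ℝ)
    (x : Fin N → ℝ) (y : Fin N → Fin K → ℝ)
    (hxbin : ∀ i, x i = 0 ∨ x i = 1)
    (hybin : ∀ i k, y i k = 0 ∨ y i k = 1)
    (hcoup : ∀ i, ∑ k, y i k = x i)
    (hassign : ∀ k, ∑ i, y i k = 1)
    (z : Fin K → ℝ) (hz : ∀ k, z k = ∑ i, p i * y i k)
    (hsort : ∀ k₁ k₂ : Fin K, k₁ ≤ k₂ → z k₂ ≤ z k₁) :
    ∀ (k : Fin K) (Zk : ℝ),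
      (z k ≤ Zk ∧ ∀ j : Fin K, k ≤ j → ∀ i, Zk < p i → y i j = 0) ∨
      (Zk ≤ z k ∧ ∀ j : Fin K, j ≤ k → ∀ i, p i < Zk → y i j = 0) := by
  -- key: if y i j = 1 then z j = p i
  have key : ∀ (j : Fin K) (i : Fin N), y i j = 1 → z j = p i := by
    intro j i hij
    have hzero : ∀ i' : Fin N, i' ≠ i → y i' j = 0 := by
      intro i' hne
      rcases hybin i' j with h | h
      · exact h
      · exfalso
        have hsub : ({i, i'} : Finset (Fin N)) ⊆ Finset.univ := Finset.subset_univ _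
        have h2 : ∑ i'' ∈ ({i, i'} : Finset (Fin N)), y i'' j ≤ ∑ i'', y i'' j := by
          apply Finset.sum_le_sum_of_subset_of_nonneg hsub
          intro i'' _ _
          rcases hybin i'' j with h' | h' <;> simp [h']
        rw [hassign, Finset.sum_pair (Ne.symm hne), hij, h] at h2
        linarith
    rw [hz]
    rw [Finset.sum_eq_single i]
    · rw [hij, mul_one]
    · intro i' _ hne
      rw [hzero i' hne, mul_zero]
    · intro h; exact absurd (Finset.mem_univ i) h
  intro k Zk
  rcases le_or_gt (z k) Zk with hle | hlt
  · left
    refine ⟨hle, fun j hkj i hpi => ?_⟩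
    rcases hybin i j with h | h
    · exact h
    · exfalso
      have := key j i h
      have := hsort k j hkj
      linarith
  · right
    refine ⟨le_of_lt hlt, fun j hjk i hpi => ?_⟩
    rcases hybin i j with h | h
    · exact h
    · exfalso
      have := key j i h
      have := hsort j k hjk
      linarith
end

section
/- Let K ≥ 2 and suppose x ∈ {0,1}^N and y ∈ {0,1}^{N×K} satisfy the order constraints with z ∈ ℝ^K defined by z_k = Σ_{i=1}^N p_i y_{ik} and z₁ ≥ z₂ ≥ … ≥ z_K. Then z₁ − z_K = p_max(x) − p_min(x); equivalently, for the weight vector v with v₁ = 1, v_K = −1, and v_k = 0 for 1 < k < K, the order-based objective Σ_{k=1}^K v_k z_k equals the range p_max(x) − p_min(x). -/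
theorem stmt_19 {N K : ℕ} (M : ℝ) (hM : 0 ≤ M) (p : Fin N → ℝ)
    (hp : ∀ i, 0 ≤ p i ∧ p i ≤ M)
    (hK : 2 ≤ K)
    (x : Fin N → ℝ) (y : Fin N → Fin K → ℝ)
    (hxbin : ∀ i, x i = 0 ∨ x i = 1)
    (hybin : ∀ i k, y i k = 0 ∨ y i k = 1)
    (hcoup : ∀ i, ∑ k, y i k = x i)
    (hassign : ∀ k, ∑ i, y i k = 1)
    (z : Fin K → ℝ) (hz : ∀ k, z k = ∑ i, p i * y i k)
    (hsort : ∀ k₁ k₂ : Fin K, k₁ ≤ k₂ → z k₂ ≤ z k₁) :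
    z ⟨0, by omega⟩ - z ⟨K - 1, by omega⟩ = pmax p x - pmin p x ∧
      ∑ k : Fin K,
        (if (k : ℕ) = 0 then (1 : ℝ) else if (k : ℕ) = K - 1 then -1 else 0) * z k =
        pmax p x - pmin p x := by
  have hynn : ∀ i k, (0:ℝ) ≤ y i k := by
    intro i k; rcases hybin i k with h | h <;> simp [h]
  -- if y i k = 1 then z k = p i
  have hval : ∀ i k, y i k = 1 → z k = p i := by
    intro i k hik
    have h1 := hassign k
    have herase : ∑ j ∈ Finset.univ.erase i, y j k = 0 := by
      have h2 := Finset.sum_erase_add Finset.univ (fun j => y j k) (Finset.mem_univ i)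
      rw [h1, hik] at h2
      linarith
    have hzero : ∀ j, j ≠ i → y j k = 0 := by
      intro j hj
      have := (Finset.sum_eq_zero_iff_of_nonneg (fun j _ => hynn j k)).mp herase j
        (Finset.mem_erase.mpr ⟨hj, Finset.mem_univ j⟩)
      exact this
    rw [hz k]
    rw [Finset.sum_eq_single i]
    · rw [hik, mul_one]
    · intro j _ hj; rw [hzero j hj, mul_zero]
    · intro h; exact absurd (Finset.mem_univ i) h
  -- every z k is in the support set
  have hA : ∀ k, ∃ i, 0 < x i ∧ p i = z k := by
    intro k
    have h1 := hassign k
    have hex : ∃ i, y i k = 1 := by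
      by_contra h
      push_neg at h
      have hz0 : ∀ i, y i k = 0 := fun i => (hybin i k).resolve_right (h i)
      simp [hz0] at h1
    obtain ⟨i, hi⟩ := hex
    refine ⟨i, ?_, (hval i k hi).symm⟩
    have hle : y i k ≤ ∑ k', y i k' :=
      Finset.single_le_sum (fun k' _ => hynn i k') (Finset.mem_univ k)
    rw [hcoup i] at hle
    rw [hi] at hle
    linarith
  -- every element of the support set is some z k
  have hB : ∀ v : ℝ, (∃ i, 0 < x i ∧ p i = v) → ∃ k, z k = v := by
    rintro v ⟨i, hxi, rfl⟩
    have hx1 : x i = 1 := (hxbin i).resolve_left (by linarith)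
    have h1 : ∑ k, y i k = 1 := by rw [hcoup i, hx1]
    have hex : ∃ k, y i k = 1 := by
      by_contra h
      push_neg at h
      have hz0 : ∀ k, y i k = 0 := fun k => (hybin i k).resolve_right (h k)
      simp [hz0] at h1
    obtain ⟨k, hk⟩ := hex
    exact ⟨k, hval i k hk⟩
  have hK0 : (0:ℕ) < K := by omega
  have hKm : K - 1 < K := by omega
  set k0 : Fin K := ⟨0, hK0⟩
  set km : Fin K := ⟨K - 1, hKm⟩
  have hmax : pmax p x = z k0 := by
    apply IsGreatest.csSup_eq
    constructor
    · exact hA k0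
    · rintro v ⟨i, hxi, rfl⟩
      obtain ⟨k, hk⟩ := hB (p i) ⟨i, hxi, rfl⟩
      rw [← hk]
      exact hsort k0 k (by exact Fin.mk_le_of_le_val (Nat.zero_le _))
  have hmin : pmin p x = z km := by
    apply IsLeast.csInf_eq
    constructor
    · exact hA km
    · rintro v ⟨i, hxi, rfl⟩
      obtain ⟨k, hk⟩ := hB (p i) ⟨i, hxi, rfl⟩
      rw [← hk]
      refine hsort k km ?_
      have hlt := k.isLt
      have hle2 : (k : ℕ) ≤ K - 1 := by omega
      exact hle2
  have hne : k0 ≠ km := by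
    have h01 : (0:ℕ) ≠ K - 1 := by omega
    exact fun hc => h01 (congrArg Fin.val hc)
  have hsum : ∑ k : Fin K,
      (if (k : ℕ) = 0 then (1 : ℝ) else if (k : ℕ) = K - 1 then -1 else 0) * z k
      = z k0 - z km := by
    have hfun : ∀ k : Fin K,
        (if (k : ℕ) = 0 then (1 : ℝ) else if (k : ℕ) = K - 1 then -1 else 0) * z k
        = (if k = k0 then z k else 0) + (if k = km then -z k else 0) := by
      intro k
      rcases eq_or_ne k k0 with h | h
      · subst h
        rw [if_pos rfl, if_pos rfl, if_neg hne, one_mul, add_zero]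
      · have h0 : (k : ℕ) ≠ 0 := by
          intro hc; exact h (Fin.ext hc)
        rcases eq_or_ne k km with h2 | h2
        · subst h2
          have hm : (km : ℕ) = K - 1 := rfl
          rw [if_neg h0, if_pos hm, if_neg h, if_pos rfl, neg_one_mul, zero_add]
        · have hm : (k : ℕ) ≠ K - 1 := by
            intro hc; exact h2 (Fin.ext hc)
          rw [if_neg h0, if_neg hm, if_neg h, if_neg h2, zero_mul, add_zero]
    rw [Finset.sum_congr rfl (fun k _ => hfun k), Finset.sum_add_distrib]
    simp only [Finset.sum_ite_eq', Finset.mem_univ, if_true]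
    ring
  refine ⟨by rw [hmax, hmin], by rw [hsum, hmax, hmin]⟩
end
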